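/- Let M be a countable coarse group satisfying the negative-expression axiom. Then for all A, B, C ∈ M: (a) AB ⊑ C holds iff Â·B̂ ⊆ Ĉ, where Â·B̂ = {x·y : x ∈ Â, y ∈ B̂}; and (b) A ⊑ B holds iff Â ⊆ B̂. -/
import Mathlib


/-! Abstract coarse groups (Nies–Schlicht–Tent). -/

namespace CoarsePaper

/-- A structure with one ternary relation `rel A B C`, read "AB ⊑ C". -/
structure CG (M : Type) : Type where
  rel : M → M → M → Prop

variable {M : Type}

/-- `U` is a *subgroup: `UU ⊑ U`. -/
def IsSub (c : CG M) (U : M) : Prop := c.rel U U U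

/-- For *subgroups, `U ⊑ V` means `UV ⊑ V`. -/
def sle (c : CG M) (U V : M) : Prop := c.rel U V V

/-- `A ∈ LC(U)`: `U` is the ⊑-maximum *subgroup with `AU ⊑ A`. -/
def LC (c : CG M) (U A : M) : Prop :=
  IsSub c U ∧ c.rel A U A ∧ ∀ V, IsSub c V → c.rel A V A → sle c V U

/-- `A ∈ RC(U)`: `U` is the ⊑-maximum *subgroup with `UA ⊑ A`. -/
def RC (c : CG M) (U A : M) : Prop :=
  IsSub c U ∧ c.rel U A A ∧ ∀ V, IsSub c V → c.rel V A A → sle c V U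

/-- `A ⊑ B` for arbitrary elements: `AU ⊑ B` for some *subgroup `U` with `A ∈ LC(U)`. -/
def cle (c : CG M) (A B : M) : Prop := ∃ U, LC c U A ∧ c.rel A U B

/-- `A`, `B` are disjoint: there are no `C`, `D` with `CD ⊑ A` and `CD ⊑ B`. -/
def Disj (c : CG M) (A B : M) : Prop := ¬ ∃ C D, c.rel C D A ∧ c.rel C D B

/-- `S(A,B)`: there is a *subgroup `V` with `A ∈ RC(V)`, `B ∈ LC(V)`, `AB ⊑ V`;
we then write `B = A⋄`. -/
def Srel (c : CG M) (A B : M) : Prop :=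
  ∃ V, RC c V A ∧ LC c V B ∧ c.rel A B V

/-- The axioms of a coarse group. -/
structure Axioms (c : CG M) : Prop where
  -- (0a) ⊑ is a partial order on *subgroups in which any two elements have a meet
  sle_refl : ∀ U, IsSub c U → sle c U U
  sle_antisymm : ∀ U V, IsSub c U → IsSub c V → sle c U V → sle c V U → U = V
  sle_trans : ∀ U V W, IsSub c U → IsSub c V → IsSub c W → sle c U V → sle c V W → sle c U W
  meet : ∀ U V, IsSub c U → IsSub c V → ∃ W, IsSub c W ∧ sle c W U ∧ sle c W V ∧
    ∀ T, IsSub c T → sle c T U → sle c T V → sle c T W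
  -- (0b) every element is a left *coset and a right *coset of some *subgroup
  exists_lc : ∀ A, ∃ U, LC c U A
  exists_rc : ∀ A, ∃ U, RC c U A
  -- (0c) ⊑ is a partial order on M extending ⊑ on *subgroups
  cle_refl : ∀ A, cle c A A
  cle_antisymm : ∀ A B, cle c A B → cle c B A → A = B
  cle_trans : ∀ A B C, cle c A B → cle c B C → cle c A C
  cle_ext : ∀ U V, IsSub c U → IsSub c V → (cle c U V ↔ sle c U V)
  -- (1)
  lc_up : ∀ U' U A', IsSub c U' → IsSub c U → sle c U' U → LC c U' A' →
    ∃ A, LC c U A ∧ cle c A' A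
  lc_disj : ∀ U' U A' A, IsSub c U' → IsSub c U → sle c U' U → LC c U' A' → LC c U A →
    cle c A' A ∨ Disj c A' A
  rc_up : ∀ U' U A', IsSub c U' → IsSub c U → sle c U' U → RC c U' A' →
    ∃ A, RC c U A ∧ cle c A' A
  rc_disj : ∀ U' U A' A, IsSub c U' → IsSub c U → sle c U' U → RC c U' A' → RC c U A →
    cle c A' A ∨ Disj c A' A
  -- (2) monotonicity
  mono : ∀ A₀ A₁ B₀ B₁ C, c.rel B₀ B₁ C → cle c A₀ B₀ → cle c A₁ B₁ → c.rel A₀ A₁ C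
  -- (3)
  lc_sub_iff : ∀ U V B, IsSub c U → IsSub c V → LC c V B →
    (sle c U V ↔ ∃ A, LC c U A ∧ cle c A B)
  rc_sub_iff : ∀ U V B, IsSub c U → IsSub c V → RC c V B →
    (sle c U V ↔ ∃ A, RC c U A ∧ cle c A B)
  -- (4) inverses
  srel_existsUnique : ∀ A, ∃! B, Srel c A B
  srel_symm : ∀ A B, Srel c A B → Srel c B A
  srel_orderIso : ∀ A B A' B', Srel c A A' → Srel c B B' → (cle c A B ↔ cle c A' B')
  -- (5) products of compatible *cosets
  prod_exists : ∀ U V W A B, RC c U A → LC c V A → RC c V B → LC c W B →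
    ∃ C, RC c U C ∧ LC c W C ∧ c.rel A B C ∧ ∀ D, c.rel A B D → cle c C D

/-- A full filter on `M`. -/
structure FullFilter (c : CG M) (x : Set M) : Prop where
  up : ∀ A ∈ x, ∀ B, cle c A B → B ∈ x
  directed : ∀ A ∈ x, ∀ B ∈ x, ∃ C ∈ x, cle c C A ∧ cle c C B
  lc_mem : ∀ U, IsSub c U → ∃ A ∈ x, LC c U A
  rc_mem : ∀ U, IsSub c U → ∃ A ∈ x, RC c U A

/-- The product of two filters: `x·y = {C : ∃ A ∈ x, B ∈ y, AB ⊑ C}`. -/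
def fprod (c : CG M) (x y : Set M) : Set M :=
  {C | ∃ A ∈ x, ∃ B ∈ y, c.rel A B C}

/-- The inverse of a filter: `x⁻¹ = {A⋄ : A ∈ x}`. -/
def finv (c : CG M) (x : Set M) : Set M :=
  {B | ∃ A ∈ x, Srel c A B}

/-- The identity filter: generated by the *subgroups. -/
def fone (c : CG M) : Set M := {C | ∃ U, IsSub c U ∧ cle c U C}

/-- The space `F(M)` of full filters on `M`. -/
abbrev FF (c : CG M) : Type := {x : Set M // FullFilter c x}

/-- The topology on `F(M)` generated by the sets `Â = {x : A ∈ x}`. -/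
def ffTop (c : CG M) : TopologicalSpace (FF c) :=
  TopologicalSpace.generateFrom {S | ∃ A : M, S = {x : FF c | A ∈ x.1}}

/-- `Â`, as a collection of subsets of `M`: the full filters containing `A`. -/
def hatS (c : CG M) (A : M) : Set (Set M) := {x | FullFilter c x ∧ A ∈ x}

/-- Associativity of the product of full filters. -/
def FAssoc (c : CG M) : Prop :=
  ∀ x y z : Set M, FullFilter c x → FullFilter c y → FullFilter c z →
    fprod c (fprod c x y) z = fprod c x (fprod c y z)

/-- The negative-expression axiom. -/
structure NegAx (c : CG M) : Prop where
  rel_iff : ∀ A B C, c.rel A B C ↔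
    ¬ ∃ D E F, cle c D A ∧ cle c E B ∧ c.rel D E F ∧ Disj c C F
  le_iff : ∀ A B, cle c A B ↔ ¬ ∃ C, cle c C A ∧ Disj c B C

/-- The action of a filter on a *coset: `x·A = B` iff `SA ⊑ B` for some `S ∈ x`. -/
def act (c : CG M) (x : Set M) (A B : M) : Prop := ∃ S ∈ x, c.rel S A B

/-- `𝒱 ⊆ F(M)` is a subgroup of the filter group `F(M)`. -/
def IsSubgroupFF (c : CG M) (V : Set (FF c)) : Prop :=
  (∀ z : FF c, z.1 = fone c → z ∈ V) ∧
  (∀ u ∈ V, ∀ v ∈ V, ∀ w : FF c, w.1 = fprod c u.1 v.1 → w ∈ V) ∧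
  (∀ u ∈ V, ∀ w : FF c, w.1 = finv c u.1 → w ∈ V)

/-- The union of double cosets `⋃_{i<n} V̂·Â_i`, as a collection of subsets of `M`
(the underlying sets of the full filters belonging to it). -/
def doubleUnion (c : CG M) (V : M) {n : ℕ} (A : Fin n → M) : Set (Set M) :=
  {z | ∃ i : Fin n, ∃ u v : Set M, FullFilter c u ∧ FullFilter c v ∧ V ∈ u ∧ A i ∈ v ∧
    z = fprod c u v}

/-- The coset-recognition axiom. -/
def CosetRec (c : CG M) : Prop :=
  ∀ V, IsSub c V → ∀ n : ℕ, 1 ≤ n → ∀ A : Fin n → M, (∀ i, LC c V (A i)) →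
    (fone c ∈ doubleUnion c V A ∧
     (∀ p ∈ doubleUnion c V A, ∀ q ∈ doubleUnion c V A, fprod c p q ∈ doubleUnion c V A) ∧
     (∀ p ∈ doubleUnion c V A, finv c p ∈ doubleUnion c V A)) →
    ∃ U, IsSub c U ∧ (∀ i, c.rel V (A i) U) ∧
      ∀ z : Set M, FullFilter c z → U ∈ z → z ∈ doubleUnion c V A

/-- Roelcke precompactness of the filter group `F(M)`: every open neighbourhood `𝒰` of the
identity satisfies `F(M) = 𝒰·F·𝒰` for some finite `F`. -/
def RoelckeFF (c : CG M) : Prop :=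
  ∀ U : Set (FF c), @IsOpen (FF c) (ffTop c) U → (∀ z : FF c, z.1 = fone c → z ∈ U) →
    ∃ F : Set (FF c), F.Finite ∧
      ∀ z : FF c, ∃ u ∈ U, ∃ f ∈ F, ∃ v ∈ U, z.1 = fprod c (fprod c u.1 f.1) v.1


theorem lc_unique (c : CG M) (ax : Axioms c) {U V A : M} (hU : LC c U A) (hV : LC c V A) :
    U = V :=
  ax.sle_antisymm U V hU.1 hV.1 (hV.2.2 U hU.1 hU.2.1) (hU.2.2 V hV.1 hV.2.1)

/-- Refinement step: below any `X` there is `X'` lying below a left *coset and a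
right *coset of a given *subgroup `U`. -/
theorem step_lemma (c : CG M) (ax : Axioms c) (X U : M) (hU : IsSub c U) :
    ∃ X', cle c X' X ∧ (∃ A, LC c U A ∧ cle c X' A) ∧ (∃ A, RC c U A ∧ cle c X' A) := by
  -- left coset refinement
  obtain ⟨W, hW⟩ := ax.exists_lc X
  obtain ⟨T, hT, hTW, hTU, -⟩ := ax.meet W U hW.1 hU
  obtain ⟨X1, hX1LC, hX1le⟩ := (ax.lc_sub_iff T W X hT hW.1 hW).mp hTW
  obtain ⟨AL, hAL, hALle⟩ := ax.lc_up T U X1 hT hU hTU hX1LC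
  -- right coset refinement below X1
  obtain ⟨W', hW'⟩ := ax.exists_rc X1
  obtain ⟨T', hT', hT'W, hT'U, -⟩ := ax.meet W' U hW'.1 hU
  obtain ⟨X2, hX2RC, hX2le⟩ := (ax.rc_sub_iff T' W' X1 hT' hW'.1 hW').mp hT'W
  obtain ⟨AR, hAR, hARle⟩ := ax.rc_up T' U X2 hT' hU hT'U hX2RC
  exact ⟨X2, ax.cle_trans _ _ _ hX2le hX1le,
    ⟨AL, hAL, ax.cle_trans _ _ _ hX2le hALle⟩, ⟨AR, hAR, hARle⟩⟩

/-- Every element of a countable coarse group lies in some full filter. -/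
theorem exists_fullFilter (c : CG M) [Countable M] (ax : Axioms c) (D : M) :
    ∃ x : Set M, FullFilter c x ∧ D ∈ x := by
  classical
  have : Nonempty M := ⟨D⟩
  obtain ⟨g, hg⟩ := exists_surjective_nat M
  -- descending chain
  let X : ℕ → M := fun n => Nat.rec D (fun n Xn =>
    if h : IsSub c (g n) then (step_lemma c ax Xn (g n) h).choose else Xn) n
  have hXsucc : ∀ n, cle c (X (n + 1)) (X n) := by
    intro n
    show cle c (if h : IsSub c (g n) then (step_lemma c ax (X n) (g n) h).choose
      else X n) (X n)
    split
    · exact (step_lemma c ax (X n) (g n) (by assumption)).choose_spec.1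
    · exact ax.cle_refl _
  have hXmono : ∀ {n m}, n ≤ m → cle c (X m) (X n) := by
    intro n m h
    induction h with
    | refl => exact ax.cle_refl _
    | step h ih => exact ax.cle_trans _ _ _ (hXsucc _) ih
  refine ⟨{B | ∃ n, cle c (X n) B}, ⟨?_, ?_, ?_, ?_⟩, ⟨0, ax.cle_refl D⟩⟩
  · rintro P ⟨n, hn⟩ Q hPQ
    exact ⟨n, ax.cle_trans _ _ _ hn hPQ⟩
  · rintro P ⟨n, hn⟩ Q ⟨m, hm⟩
    refine ⟨X (max n m), ⟨max n m, ax.cle_refl _⟩,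
      ax.cle_trans _ _ _ (hXmono (le_max_left n m)) hn,
      ax.cle_trans _ _ _ (hXmono (le_max_right n m)) hm⟩
  · intro U hU
    obtain ⟨n, rfl⟩ := hg U
    have hXn : X (n + 1) = (step_lemma c ax (X n) (g n) hU).choose := by
      show (if h : IsSub c (g n) then _ else _) = _
      rw [dif_pos hU]
    obtain ⟨A, hA, hle⟩ := (step_lemma c ax (X n) (g n) hU).choose_spec.2.1
    exact ⟨A, ⟨n + 1, hXn ▸ hle⟩, hA⟩
  · intro U hU
    obtain ⟨n, rfl⟩ := hg U
    have hXn : X (n + 1) = (step_lemma c ax (X n) (g n) hU).choose := by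
      show (if h : IsSub c (g n) then _ else _) = _
      rw [dif_pos hU]
    obtain ⟨A, hA, hle⟩ := (step_lemma c ax (X n) (g n) hU).choose_spec.2.2
    exact ⟨A, ⟨n + 1, hXn ▸ hle⟩, hA⟩

/-- (a) `AB ⊑ C` iff `Â·B̂ ⊆ Ĉ`, and (b) `A ⊑ B` iff `Â ⊆ B̂`. -/
theorem stmt6 (c : CG M) [Countable M] (ax : Axioms c) (nax : NegAx c) (A B C : M) :
    (c.rel A B C ↔ ∀ x y : Set M, FullFilter c x → FullFilter c y → A ∈ x → B ∈ y →
      C ∈ fprod c x y) ∧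
    (cle c A B ↔ ∀ x : Set M, FullFilter c x → A ∈ x → B ∈ x) := by
  constructor
  · constructor
    · intro h x y _ _ hA hB
      exact ⟨A, hA, B, hB, h⟩
    · intro H
      by_contra hrel
      obtain ⟨D, E, F, hDA, hEB, hDEF, hdisj⟩ := (not_iff_not.mpr (nax.rel_iff A B C)).mp hrel
        |> not_not.mp
      obtain ⟨x, hx, hDx⟩ := exists_fullFilter c ax D
      obtain ⟨y, hy, hEy⟩ := exists_fullFilter c ax E
      obtain ⟨A', hA'x, B', hB'y, hA'B'⟩ :=
        H x y hx hy (hx.up D hDx A hDA) (hy.up E hEy B hEB)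
      obtain ⟨G, hGx, hGA', hGD⟩ := hx.directed A' hA'x D hDx
      obtain ⟨Hh, hHy, hHB', hHE⟩ := hy.directed B' hB'y E hEy
      exact hdisj ⟨G, Hh, ax.mono G Hh A' B' C hA'B' hGA' hHB',
        ax.mono G Hh D E F hDEF hGD hHE⟩
  · constructor
    · intro h x hx hA
      exact hx.up A hA B h
    · intro H
      by_contra hle
      obtain ⟨C', hC'A, hdisj⟩ := (not_iff_not.mpr (nax.le_iff A B)).mp hle |> not_not.mp
      obtain ⟨x, hx, hC'x⟩ := exists_fullFilter c ax C'
      have hAx := hx.up C' hC'x A hC'A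
      have hBx := H x hx hAx
      obtain ⟨G, hGx, hGB, hGC'⟩ := hx.directed B hBx C' hC'x
      obtain ⟨U, hU, hrelB⟩ := hGB
      obtain ⟨U', hU', hrelC⟩ := hGC'
      have : U = U' := lc_unique c ax hU hU'
      exact hdisj ⟨G, U, hrelB, this ▸ hrelC⟩

end CoarsePaper
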